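/- In any dagger compact category, for morphisms f, g : I → A, the equality (f_* ⊗ f)(f_* ⊗ f)† = (g_* ⊗ g)(g_* ⊗ g)† of morphisms A* ⊗ A → A* ⊗ A is equivalent to (f ⊗ f)(f ⊗ f)† = (g ⊗ g)(g ⊗ g)†. -/

import Mathlib

/-!
Write `P = f f†` and `P' = f_* f_*†`. Bending the `Aᘁ` wire of an endomorphism of `Aᘁ ⊗ A`
with the cup `(β ≫ ε)†` and the cap `ε` turns `P' ⊗ P` into `(θ P) ⊗ P`, and bending the first
`A` wire of an endomorphism of `A ⊗ A` with the cup `η ≫ β` and the cap `η†` turns `P ⊗ P` into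
`(ξ P') ⊗ P`. Here `θ` and `ξ` are closed diagrams on the unit and on its dual, independent of `f`.
As the dagger need not be compatible with the duality they need not be identities, but they are
invertible because the unit is self-dual, so they cancel from both sides of each equation.
-/
open CategoryTheory MonoidalCategory

universe v u

/-- A dagger structure on a category. -/
class Dagger (C : Type u) [Category.{v} C] where
  dag : ∀ {X Y : C}, (X ⟶ Y) → (Y ⟶ X)
  dag_dag : ∀ {X Y : C} (f : X ⟶ Y), dag (dag f) = f
  dag_id : ∀ X : C, dag (𝟙 X) = 𝟙 X
  dag_comp : ∀ {X Y Z : C} (f : X ⟶ Y) (g : Y ⟶ Z), dag (f ≫ g) = dag g ≫ dag f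

open Dagger

/-- A dagger symmetric monoidal category. -/
class DaggerSMC (C : Type u) [Category.{v} C] [MonoidalCategory C] [SymmetricCategory C]
    extends Dagger C where
  dag_tensor : ∀ {X Y X' Y' : C} (f : X ⟶ Y) (g : X' ⟶ Y'), dag (f ⊗ₘ g) = dag f ⊗ₘ dag g
  dag_assoc : ∀ X Y Z : C, dag (α_ X Y Z).hom = (α_ X Y Z).inv
  dag_left : ∀ X : C, dag (λ_ X).hom = (λ_ X).inv
  dag_right : ∀ X : C, dag (ρ_ X).hom = (ρ_ X).inv
  dag_braid : ∀ X Y : C, dag (β_ X Y).hom = (β_ X Y).inv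

section Monoidal

variable {C : Type*} [Category C] [MonoidalCategory C]

/-- `y : U ⟶ U'` bent into `V' ⟶ V` along the cup `c` and the cap `d`. -/
def bend {U U' V V' : C} (c : 𝟙_ C ⟶ V ⊗ U) (d : U' ⊗ V' ⟶ 𝟙_ C) (y : U ⟶ U') : V' ⟶ V :=
  (λ_ V').inv ≫ c ▷ V' ≫ (α_ V U V').hom ≫ V ◁ y ▷ V' ≫ V ◁ d ≫ (ρ_ V).hom

instance isIso_bend {U U' V V' : C} (c : 𝟙_ C ⟶ V ⊗ U) (d : U' ⊗ V' ⟶ 𝟙_ C) (y : U ⟶ U')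
    [IsIso c] [IsIso d] [IsIso y] : IsIso (bend c d y) := by
  unfold bend; infer_instance

theorem bend_comp_left {U U₁ U' V V₁ V' : C} {c : 𝟙_ C ⟶ V ⊗ U} {c' : 𝟙_ C ⟶ V₁ ⊗ U₁}
    (d : U' ⊗ V' ⟶ 𝟙_ C) {y₁ : U ⟶ U₁} {k : V₁ ⟶ V} (h : c ≫ V ◁ y₁ = c' ≫ k ▷ U₁)
    (y : U₁ ⟶ U') : bend c d (y₁ ≫ y) = bend c' d y ≫ k := by
  calc bend c d (y₁ ≫ y)
      = (λ_ V').inv ≫ (c ≫ V ◁ y₁) ▷ V' ⊗≫ V ◁ y ▷ V' ≫ V ◁ d ≫ (ρ_ V).hom := by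
        unfold bend; monoidal
    _ = (λ_ V').inv ≫ c' ▷ V' ⊗≫ (k ▷ (U₁ ⊗ V') ≫ V ◁ y ▷ V' ≫ V ◁ d) ≫ (ρ_ V).hom := by
        rw [h]; monoidal
    _ = bend c' d y ≫ k := by
        rw [← whisker_exchange_assoc, ← whisker_exchange]; unfold bend; monoidal

theorem bend_comp_right {U U' U₂ V V' V₂ : C} (c : 𝟙_ C ⟶ V ⊗ U) {d : U' ⊗ V' ⟶ 𝟙_ C}
    {d' : U₂ ⊗ V₂ ⟶ 𝟙_ C} {y₂ : U₂ ⟶ U'} {k : V' ⟶ V₂} (h : y₂ ▷ V' ≫ d = U₂ ◁ k ≫ d')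
    (y : U ⟶ U₂) : bend c d (y ≫ y₂) = k ≫ bend c d' y := by
  calc bend c d (y ≫ y₂)
      = (λ_ V').inv ≫ c ▷ V' ⊗≫ V ◁ (y ▷ V' ≫ (U₂ ◁ k ≫ d')) ≫ (ρ_ V).hom := by
        rw [← h]; unfold bend; monoidal
    _ = (λ_ V').inv ≫ (c ▷ V' ≫ (V ⊗ U) ◁ k) ⊗≫ V ◁ y ▷ V₂ ≫ V ◁ d' ≫ (ρ_ V).hom := by
        rw [← whisker_exchange_assoc]; monoidal
    _ = k ≫ bend c d' y := by
        rw [← whisker_exchange]; unfold bend; monoidal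

theorem bend_comp {U U₁ U' V V₁ V' V₂ : C} {c : 𝟙_ C ⟶ V ⊗ U} {c' : 𝟙_ C ⟶ V₁ ⊗ U₁}
    {d : U' ⊗ V' ⟶ 𝟙_ C} {d' : U₁ ⊗ V₂ ⟶ 𝟙_ C} {y₁ : U ⟶ U₁} {y₂ : U₁ ⟶ U'} {k : V₁ ⟶ V}
    {k' : V' ⟶ V₂} (hc : c ≫ V ◁ y₁ = c' ≫ k ▷ U₁) (hd : y₂ ▷ V' ≫ d = U₁ ◁ k' ≫ d') :
    bend c d (y₁ ≫ y₂) = k' ≫ bend c' d' (𝟙 U₁) ≫ k := by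
  rw [bend_comp_left d hc, ← Category.id_comp y₂, bend_comp_right c' hd, Category.assoc]

theorem comp_scalar {Y : C} (σ : 𝟙_ C ⟶ 𝟙_ C) (t : 𝟙_ C ⟶ Y) :
    σ ≫ t = t ≫ (ρ_ Y).inv ≫ Y ◁ σ ≫ (ρ_ Y).hom := by
  calc σ ≫ t = (ρ_ (𝟙_ C)).inv ≫ (𝟙_ C ◁ σ ≫ t ▷ 𝟙_ C) ≫ (ρ_ Y).hom := by monoidal
    _ = t ≫ (ρ_ Y).inv ≫ Y ◁ σ ≫ (ρ_ Y).hom := by rw [whisker_exchange]; monoidal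

theorem comp_comp_tensorHom_eq_iff {M X Y B B' : C} (e : M ≅ 𝟙_ C) (ξ : M ⟶ M) [IsIso ξ]
    (s s' : X ⟶ M) (t t' : M ⟶ Y) (z z' : B ⟶ B') :
    (s ≫ ξ ≫ t) ⊗ₘ z = (s' ≫ ξ ≫ t') ⊗ₘ z' ↔ (s ≫ t) ⊗ₘ z = (s' ≫ t') ⊗ₘ z' := by
  let κ := (ρ_ Y).inv ≫ Y ◁ (e.inv ≫ ξ ≫ e.hom) ≫ (ρ_ Y).hom
  have hκ (s : X ⟶ M) (t : M ⟶ Y) : s ≫ ξ ≫ t = (s ≫ t) ≫ κ :=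
    calc s ≫ ξ ≫ t = s ≫ e.hom ≫ ((e.inv ≫ ξ ≫ e.hom) ≫ e.inv ≫ t) := by simp
      _ = (s ≫ t) ≫ κ := by rw [comp_scalar]; simp [κ]
  rw [hκ s, hκ s', ← tensorHom_comp_whiskerRight (s ≫ t) κ z,
    ← tensorHom_comp_whiskerRight (s' ≫ t') κ z', cancel_mono]

instance isIso_evaluation_unit (Y : C) [p : ExactPairing (𝟙_ C) Y] : IsIso (ε_ (𝟙_ C) Y) := by
  have hη : η_ (𝟙_ C) (𝟙_ C) = (ρ_ _).inv := rfl
  have h : ε_ (𝟙_ C) Y = (ρ_ Y).hom ≫ (rightDualIso p exactPairingUnit).hom := by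
    simp [rightDualIso, rightAdjointMate, hη, unitors_equal]
  rw [h]; infer_instance

instance isIso_coevaluation_unit (Y : C) [p : ExactPairing (𝟙_ C) Y] :
    IsIso (η_ (𝟙_ C) Y) := by
  have hε : ε_ (𝟙_ C) (𝟙_ C) = (ρ_ _).hom := rfl
  have h : η_ (𝟙_ C) Y = (rightDualIso p exactPairingUnit).inv ≫ (λ_ Y).inv := by
    simp [rightDualIso, rightAdjointMate, hε, unitors_equal]
  rw [h]; infer_instance

end Monoidal

section Braided

variable {C : Type*} [Category C] [MonoidalCategory C] [BraidedCategory C]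

def bendLeft {U U' V V' B B' : C} (c : 𝟙_ C ⟶ V ⊗ U) (d : U' ⊗ V' ⟶ 𝟙_ C)
    (w : U ⊗ B ⟶ U' ⊗ B') : V' ⊗ B ⟶ V ⊗ B' :=
  (λ_ V').inv ▷ B ≫ (c ▷ V') ▷ B ⊗≫ V ◁ U ◁ (β_ V' B).hom ⊗≫ V ◁ w ▷ V' ⊗≫
    V ◁ U' ◁ (β_ V' B').inv ⊗≫ V ◁ d ▷ B' ≫ V ◁ (λ_ B').hom

theorem bendLeft_tensorHom {U U' V V' B B' : C} (c : 𝟙_ C ⟶ V ⊗ U) (d : U' ⊗ V' ⟶ 𝟙_ C)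
    (y : U ⟶ U') (z : B ⟶ B') : bendLeft c d (y ⊗ₘ z) = bend c d y ⊗ₘ z := by
  have hz : (β_ V' B).hom ≫ z ▷ V' ≫ (β_ V' B').inv = V' ◁ z := by
    rw [← BraidedCategory.braiding_naturality_right_assoc, Iso.hom_inv_id, Category.comp_id]
  calc bendLeft c d (y ⊗ₘ z)
      = (λ_ V').inv ▷ B ≫ (c ▷ V') ▷ B ⊗≫ V ◁ (U ◁ (β_ V' B).hom ≫ y ▷ (B ⊗ V')) ⊗≫
          V ◁ U' ◁ (z ▷ V' ≫ (β_ V' B').inv) ⊗≫ V ◁ d ▷ B' ≫ V ◁ (λ_ B').hom := by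
        unfold bendLeft; rw [MonoidalCategory.tensorHom_def]; monoidal
    _ = (λ_ V').inv ▷ B ≫ (c ▷ V') ▷ B ⊗≫ V ◁ y ▷ (V' ⊗ B) ⊗≫
          V ◁ U' ◁ ((β_ V' B).hom ≫ z ▷ V' ≫ (β_ V' B').inv) ⊗≫ V ◁ d ▷ B' ≫
            V ◁ (λ_ B').hom := by
        rw [whisker_exchange]; monoidal
    _ = (λ_ V').inv ▷ B ≫ (c ▷ V') ▷ B ⊗≫ V ◁ y ▷ (V' ⊗ B) ⊗≫
          V ◁ ((U' ⊗ V') ◁ z ≫ d ▷ B') ≫ V ◁ (λ_ B').hom := by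
        rw [hz]; monoidal
    _ = bend c d y ⊗ₘ z := by
        rw [whisker_exchange, MonoidalCategory.tensorHom_def]; unfold bend; monoidal

theorem bend_tensorHom_congr {U U' V V' B B' : C} (c : 𝟙_ C ⟶ V ⊗ U) (d : U' ⊗ V' ⟶ 𝟙_ C)
    {y y' : U ⟶ U'} {z z' : B ⟶ B'} (h : y ⊗ₘ z = y' ⊗ₘ z') :
    bend c d y ⊗ₘ z = bend c d y' ⊗ₘ z' := by
  simpa only [bendLeft_tensorHom] using congrArg (bendLeft c d) h

def evFlip (X : C) [HasRightDual X] : X ⊗ Xᘁ ⟶ 𝟙_ C := (β_ X Xᘁ).hom ≫ ε_ X Xᘁ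

instance isIso_evFlip (X : C) [HasRightDual X] [IsIso (ε_ X Xᘁ)] : IsIso (evFlip X) := by
  unfold evFlip; infer_instance

theorem whiskerLeft_rightAdjointMate_comp_evFlip {X Y : C} [HasRightDual X] [HasRightDual Y]
    (f : X ⟶ Y) : X ◁ fᘁ ≫ evFlip X = f ▷ Yᘁ ≫ evFlip Y := by
  rw [evFlip, evFlip, BraidedCategory.braiding_naturality_right_assoc,
    rightAdjointMate_comp_evaluation, BraidedCategory.braiding_naturality_left_assoc]

theorem coevaluation_comp_braiding_comp_whiskerLeft {X Y : C} [HasRightDual X]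
    [HasRightDual Y] (f : X ⟶ Y) :
    η_ X Xᘁ ≫ (β_ X Xᘁ).hom ≫ Xᘁ ◁ f = η_ Y Yᘁ ≫ (β_ Y Yᘁ).hom ≫ fᘁ ▷ Y := by
  rw [← BraidedCategory.braiding_naturality_left, ← coevaluation_comp_rightAdjointMate_assoc,
    BraidedCategory.braiding_naturality_right]

end Braided

variable {C : Type u} [Category.{v} C] [MonoidalCategory C] [SymmetricCategory C] [DaggerSMC C]

/-- The CP-form `(f† ⊗ id)(id ⊗ σ)(f ⊗ id)` of a Kraus morphism `f : A ⟶ X ⊗ B`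
(ancillary system `X`), written with coherence isomorphisms inserted. -/
def CPform {A B X : C} (f : A ⟶ X ⊗ B) : A ⊗ B ⟶ A ⊗ B :=
  (f ▷ B) ≫ (α_ X B B).hom ≫ (X ◁ (β_ B B).hom) ≫ (α_ X B B).inv ≫ (dag f ▷ B)

/-- The composition in `CP(C)` of the CP-form of `f : A ⟶ X ⊗ B` with the CP-form of
`g : B ⟶ D ⊗ E`, given by the composition diagram of the CP-construction. -/
def CPcomp {A B X D E : C} (f : A ⟶ X ⊗ B) (g : B ⟶ D ⊗ E) : A ⊗ E ⟶ A ⊗ E :=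
  (f ▷ E) ≫ (α_ X B E).hom ≫ (X ◁ (g ▷ E)) ≫ (X ◁ (α_ D E E).hom) ≫
    (X ◁ (D ◁ (β_ E E).hom)) ≫ (X ◁ (α_ D E E).inv) ≫ (X ◁ (dag g ▷ E)) ≫
    (α_ X B E).inv ≫ (dag f ▷ E)

theorem dag_whiskerLeft (Z : C) {X Y : C} (f : X ⟶ Y) : dag (Z ◁ f) = Z ◁ dag f := by
  rw [← id_tensorHom, ← id_tensorHom, DaggerSMC.dag_tensor, dag_id]

theorem dag_whiskerRight {X Y : C} (f : X ⟶ Y) (Z : C) : dag (f ▷ Z) = dag f ▷ Z := by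
  rw [← tensorHom_id, ← tensorHom_id, DaggerSMC.dag_tensor, dag_id]

instance isIso_dag {X Y : C} (f : X ⟶ Y) [IsIso f] : IsIso (dag f) :=
  ⟨dag (inv f), by rw [← dag_comp, IsIso.inv_hom_id, dag_id],
    by rw [← dag_comp, IsIso.hom_inv_id, dag_id]⟩

theorem dag_tensorHom_comp_self {X Y X' Y' : C} (f : X ⟶ Y) (g : X' ⟶ Y') :
    dag (f ⊗ₘ g) ≫ (f ⊗ₘ g) = (dag f ≫ f) ⊗ₘ (dag g ≫ g) := by
  rw [DaggerSMC.dag_tensor, tensorHom_comp_tensorHom]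

theorem dag_evFlip_comp_whiskerLeft {X Y : C} [HasRightDual X] [HasRightDual Y]
    (f : X ⟶ Y) : dag (evFlip X) ≫ X ◁ dag (fᘁ) = dag (evFlip Y) ≫ dag f ▷ Yᘁ := by
  simpa only [dag_comp, dag_whiskerLeft, dag_whiskerRight] using
    congrArg dag (whiskerLeft_rightAdjointMate_comp_evFlip f)

theorem whiskerRight_comp_dag_coevaluation {X Y : C} [HasRightDual X] [HasRightDual Y]
    (f : X ⟶ Y) : f ▷ Yᘁ ≫ dag (η_ Y Yᘁ) = X ◁ dag ((dag f)ᘁ) ≫ dag (η_ X Xᘁ) := by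
  simpa only [dag_comp, dag_whiskerLeft, dag_whiskerRight, dag_dag] using
    (congrArg dag (coevaluation_comp_rightAdjointMate (dag f))).symm

section Compact

variable [RightRigidCategory C]

/-- Conjugation `f_*` of a morphism, defined as the right adjoint mate of the dagger. -/
def conj' {X Y : C} (f : X ⟶ Y) : Xᘁ ⟶ Yᘁ := (dag f)ᘁ

/-- The cup `𝟙 ⟶ Xᘁ ⊗ X` obtained from the coevaluation and the symmetry. -/
def coevFlip (X : C) : 𝟙_ C ⟶ Xᘁ ⊗ X := η_ X Xᘁ ≫ (β_ X Xᘁ).hom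

/-- A doubled cup `𝟙 ⟶ (Bᘁ ⊗ Xᘁ) ⊗ (X ⊗ B)`. -/
def coev2 (B X : C) : 𝟙_ C ⟶ (Bᘁ ⊗ Xᘁ) ⊗ (X ⊗ B) :=
  (λ_ (𝟙_ C)).inv ≫ (coevFlip B ⊗ₘ coevFlip X) ≫ tensorμ Bᘁ B Xᘁ X ≫
    ((Bᘁ ⊗ Xᘁ) ◁ (β_ B X).hom)

/-- The conjugate `f_* : Aᘁ ⟶ Bᘁ ⊗ Xᘁ` of a Kraus morphism `f : A ⟶ X ⊗ B`,
reversing the order of the tensor factors. -/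
def conjKraus {A B X : C} (f : A ⟶ X ⊗ B) : Aᘁ ⟶ Bᘁ ⊗ Xᘁ :=
  (λ_ Aᘁ).inv ≫ (coev2 B X ▷ Aᘁ) ≫ (α_ (Bᘁ ⊗ Xᘁ) (X ⊗ B) Aᘁ).hom ≫
    ((Bᘁ ⊗ Xᘁ) ◁ (dag f ▷ Aᘁ)) ≫ ((Bᘁ ⊗ Xᘁ) ◁ ((β_ A Aᘁ).hom ≫ ε_ A Aᘁ)) ≫
    (ρ_ (Bᘁ ⊗ Xᘁ)).hom

/-- Selinger's CPM-form `(id ⊗ η† ⊗ id)(f_* ⊗ f) : Aᘁ ⊗ A ⟶ Bᘁ ⊗ B` of a Kraus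
morphism `f : A ⟶ X ⊗ B`. -/
def CPMform {A B X : C} (f : A ⟶ X ⊗ B) : Aᘁ ⊗ A ⟶ Bᘁ ⊗ B :=
  (conjKraus f ⊗ₘ f) ≫ (α_ Bᘁ Xᘁ (X ⊗ B)).hom ≫ (Bᘁ ◁ (α_ Xᘁ X B).inv) ≫
    (Bᘁ ◁ (ε_ X Xᘁ ▷ B)) ≫ (Bᘁ ◁ (λ_ B).hom)

theorem bend_dag_conj'_comp_conj' {X A : C} (f : X ⟶ A) :
    bend (dag (evFlip A)) (ε_ A Aᘁ) (dag (conj' f) ≫ conj' f) =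
      dag f ≫ bend (dag (evFlip X)) (ε_ X Xᘁ) (𝟙 Xᘁ) ≫ f := by
  rw [conj', bend_comp (dag_evFlip_comp_whiskerLeft (dag f))
    (rightAdjointMate_comp_evaluation (dag f)), dag_dag]

theorem bend_dag_comp_self {X A : C} (f : X ⟶ A) :
    bend (coevFlip A) (dag (η_ A Aᘁ)) (dag f ≫ f) =
      dag (conj' f) ≫ bend (coevFlip X) (dag (η_ X Xᘁ)) (𝟙 X) ≫ conj' f := by
  refine bend_comp ?_ (whiskerRight_comp_dag_coevaluation f)
  simpa only [coevFlip, conj', Category.assoc] using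
    coevaluation_comp_braiding_comp_whiskerLeft (dag f)

/-- In a dagger compact category, for states `f, g : I ⟶ A`, the equality
`(f_* ⊗ f)(f_* ⊗ f)† = (g_* ⊗ g)(g_* ⊗ g)†` of endomorphisms of `Aᘁ ⊗ A` is
equivalent to `(f ⊗ f)(f ⊗ f)† = (g ⊗ g)(g ⊗ g)†`. -/
theorem conj_double_iff_double {A : C} (f g : 𝟙_ C ⟶ A) :
    (dag (conj' f ⊗ₘ f) ≫ (conj' f ⊗ₘ f) = dag (conj' g ⊗ₘ g) ≫ (conj' g ⊗ₘ g)) ↔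
    (dag (f ⊗ₘ f) ≫ (f ⊗ₘ f) = dag (g ⊗ₘ g) ≫ (g ⊗ₘ g)) := by
  simp only [dag_tensorHom_comp_self]
  constructor <;> intro h
  · have h' := bend_tensorHom_congr (dag (evFlip A)) (ε_ A Aᘁ) h
    rwa [bend_dag_conj'_comp_conj', bend_dag_conj'_comp_conj',
      comp_comp_tensorHom_eq_iff (Iso.refl _)] at h'
  · have : IsIso (coevFlip (𝟙_ C)) := by unfold coevFlip; infer_instance
    have h' := bend_tensorHom_congr (coevFlip A) (dag (η_ A Aᘁ)) h
    rwa [bend_dag_comp_self, bend_dag_comp_self,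
      comp_comp_tensorHom_eq_iff (rightDualIso inferInstance exactPairingUnit)] at h'

end Compact
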